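/- arXiv:1604.00197 — 3 statements merged into one kernel-verified Lean document; each statement's English description precedes it below -/
import Mathlib

section
/- Let K be a symmetric quadratic form on ℝ^{d×𝓡} (K_{jρlσ} = K_{lσjρ}). Then for any [0,N)^d-periodic y : ℤ^d → ℝ^d, Σ_{x∈Q_N} K[D_{𝓡,1}y(x), D_{𝓡,1}y(x)] = N^d Σ_{k∈Q̂_N} ŷ(k)^T H(k) conj(ŷ(k)), where H(k)_{jl} = Σ_{ρ,σ∈𝓡} K_{jρlσ}(cos(ρ·k)−1+i sin(ρ·k))(cos(σ·k)−1−i sin(σ·k)). Moreover H(k) is Hermitian, [0,2π)^d-periodic, and conj(H(k)) = H(−k); if additionally K_{jρlσ} = K_{j(−ρ)l(−σ)}, then H(k) is real symmetric with H(k)_{jl} = Σ_{ρ,σ} K_{jρlσ}[(cos(ρk)−1)(cos(σk)−1)+sin(ρk)sin(σk)]. -/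
/-!
Write `D_ρ y = y(· + ρ) - y`. Since `y` is `N`-periodic, translation by `ρ` only permutes the
cube `Q_N` modulo `N`, so the discrete Fourier transform turns `D_ρ` into multiplication by the
symbol `e^{iρ·k} - 1`. Parseval's identity on `Q_N`, i.e. orthogonality of the characters
`x ↦ e^{-ix·k}` for `k ∈ Q̂_N`, then turns the quadratic form into `Σ_k ŷ(k)ᵀ H(k) conj ŷ(k)`,
where `H(k)_{jl} = Σ_{ρ,σ} K_{jρlσ} (e^{iρ·k} - 1) conj (e^{iσ·k} - 1)`.

In this form `H` inherits from the symbol its `2π`-periodicity and `conj H(k) = H(-k)`, and it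
is Hermitian by the symmetry of `K`. If moreover
`K_{jρlσ} = K_{j(-ρ)l(-σ)}`, the substitution `ρ ↦ -ρ` gives `H(-k) = H(k) = conj H(k)`, so `H(k)`
is real and, being Hermitian, symmetric.
-/

open Real

noncomputable section

/-- The inner product `ρ·k` of a lattice vector `ρ ∈ 𝓡` with `k ∈ ℝ^d`. -/
def ipk (d : ℕ) (ρ : Fin d → ℤ) (k : Fin d → ℝ) : ℝ :=
  ∑ i, (ρ i : ℝ) * k i

/-- The dynamical matrix
`H(k)_{jl} = Σ_{ρ,σ} K_{jρlσ} (cos(ρk)−1+i sin(ρk))(cos(σk)−1−i sin(σk))`. -/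
def Hmat (d : ℕ) (R : Finset (Fin d → ℤ))
    (K : Fin d → ↥R → Fin d → ↥R → ℝ) (k : Fin d → ℝ) :
    Matrix (Fin d) (Fin d) ℂ :=
  fun j l => ∑ ρ : ↥R, ∑ σ : ↥R,
    ((K j ρ l σ : ℝ) : ℂ) *
      (((Real.cos (ipk d ρ.1 k) - 1 : ℝ) : ℂ) +
        Complex.I * ((Real.sin (ipk d ρ.1 k) : ℝ) : ℂ)) *
      (((Real.cos (ipk d σ.1 k) - 1 : ℝ) : ℂ) -
        Complex.I * ((Real.sin (ipk d σ.1 k) : ℝ) : ℂ))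

open ComplexConjugate

section Lattice

variable {d : ℕ}

theorem ipk_add_left (ρ σ : Fin d → ℤ) (k : Fin d → ℝ) :
    ipk d (ρ + σ) k = ipk d ρ k + ipk d σ k := by
  simp only [ipk, Pi.add_apply, Int.cast_add, add_mul, Finset.sum_add_distrib]

theorem ipk_neg_left (ρ : Fin d → ℤ) (k : Fin d → ℝ) : ipk d (-ρ) k = -ipk d ρ k := by
  simp only [ipk, Pi.neg_apply, Int.cast_neg, neg_mul, Finset.sum_neg_distrib]

theorem ipk_neg_right (ρ : Fin d → ℤ) (k : Fin d → ℝ) : ipk d ρ (-k) = -ipk d ρ k := by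
  simp only [ipk, Pi.neg_apply, mul_neg, Finset.sum_neg_distrib]

theorem ipk_add_two_pi_mul_right (ρ : Fin d → ℤ) (k : Fin d → ℝ) (m : Fin d → ℤ) :
    ipk d ρ (fun i => k i + 2 * π * m i) = ipk d ρ k + (∑ i, ρ i * m i : ℤ) * (2 * π) := by
  simp only [ipk, Int.cast_sum, Int.cast_mul, Finset.sum_mul, ← Finset.sum_add_distrib]
  exact Finset.sum_congr rfl fun i _ => by ring

end Lattice

theorem exp_I_mul_int_mul_two_pi (n : ℤ) :
    Complex.exp (Complex.I * ((n * (2 * π) : ℝ) : ℂ)) = 1 := by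
  rw [← Complex.exp_int_mul_two_pi_mul_I n]
  push_cast
  ring_nf

theorem sum_fin_exp_int_mul {N : ℕ} (hN : 0 < N) (a : ℤ) :
    ∑ m : Fin N, Complex.exp (Complex.I * ((a * (2 * π * m / N) : ℝ) : ℂ)) =
      if (N : ℤ) ∣ a then (N : ℂ) else 0 := by
  have hζ := Complex.isPrimitiveRoot_exp N hN.ne'
  have hterm : ∀ m : Fin N, Complex.exp (Complex.I * ((a * (2 * π * m / N) : ℝ) : ℂ)) =
      (Complex.exp (2 * π * Complex.I / N) ^ a) ^ (m : ℕ) := by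
    intro m
    rw [← Complex.exp_int_mul, ← Complex.exp_nat_mul]
    push_cast
    ring_nf
  simp_rw [hterm]
  rw [Fin.sum_univ_eq_sum_range (fun m => (_ ^ a) ^ m)]
  split_ifs with hdvd
  · simp [(hζ.zpow_eq_one_iff_dvd a).2 hdvd]
  · have hw := mt (hζ.zpow_eq_one_iff_dvd a).1 hdvd
    have hwN : (Complex.exp (2 * π * Complex.I / N) ^ a) ^ N = 1 := by
      rw [← zpow_natCast, ← zpow_mul, mul_comm a, zpow_mul, zpow_natCast, hζ.pow_eq_one, one_zpow]
    rw [geom_sum_eq hw, hwN, sub_self, zero_div]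

theorem Fin.natCast_dvd_val_sub_val_iff {N : ℕ} (a b : Fin N) :
    (N : ℤ) ∣ (b : ℤ) - a ↔ a = b := by
  refine ⟨fun h => Fin.ext ?_, fun h => by simp [h]⟩
  have := Int.eq_zero_of_dvd_of_natAbs_lt_natAbs h (by omega)
  omega

section Fourier

variable {d N : ℕ}

def gridPoint (x : Fin d → Fin N) : Fin d → ℤ := fun i => x i

def dualPoint (N : ℕ) (k : Fin d → Fin N) : Fin d → ℝ := fun i => 2 * π * k i / N

def gridChar (N : ℕ) (k : Fin d → Fin N) (w : Fin d → ℤ) : ℂ :=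
  Complex.exp (-(Complex.I * ipk d w (dualPoint N k)))

def dft (N : ℕ) (u : (Fin d → ℤ) → ℂ) (k : Fin d → Fin N) : ℂ :=
  ((N : ℂ) ^ d)⁻¹ * ∑ x : Fin d → Fin N, u (gridPoint x) * gridChar N k (gridPoint x)

theorem gridChar_gridPoint (k x : Fin d → Fin N) :
    gridChar N k (gridPoint x) =
      Complex.exp (-(Complex.I * ((∑ i, (x i : ℝ) * (2 * π * (k i : ℝ) / N) : ℝ) : ℂ))) := by
  simp only [gridChar, gridPoint, ipk, dualPoint, Int.cast_natCast]

theorem gridChar_add (k : Fin d → Fin N) (w w' : Fin d → ℤ) :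
    gridChar N k (w + w') = gridChar N k w * gridChar N k w' := by
  simp only [gridChar, ipk_add_left, ← Complex.exp_add]
  push_cast
  ring_nf

theorem ipk_nsmul_dualPoint (hN : 0 < N) (z : Fin d → ℤ) (k : Fin d → Fin N) :
    ipk d (N • z) (dualPoint N k) = (∑ i, z i * k i : ℤ) * (2 * π) := by
  have : (N : ℝ) ≠ 0 := Nat.cast_ne_zero.2 hN.ne'
  simp only [ipk, dualPoint, Pi.smul_apply, nsmul_eq_mul, Int.cast_sum, Int.cast_mul,
    Int.cast_natCast, Finset.sum_mul]
  exact Finset.sum_congr rfl fun i _ => by field_simp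

theorem gridChar_nsmul (hN : 0 < N) (k : Fin d → Fin N) (z : Fin d → ℤ) :
    gridChar N k (N • z) = 1 := by
  rw [gridChar, ipk_nsmul_dualPoint hN, Complex.exp_neg, exp_I_mul_int_mul_two_pi, inv_one]

theorem gridChar_mul_conj (k : Fin d → Fin N) (w w' : Fin d → ℤ) :
    gridChar N k w * conj (gridChar N k w') =
      ∏ i, Complex.exp (Complex.I * (((w' i - w i : ℤ) * (2 * π * k i / N) : ℝ) : ℂ)) := by
  rw [gridChar, gridChar, ← Complex.exp_conj, ← Complex.exp_add, ← Complex.exp_sum]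
  congr 1
  simp only [ipk, dualPoint, map_neg, map_mul, Complex.conj_I, Complex.conj_ofReal]
  push_cast
  simp only [Finset.mul_sum, ← Finset.sum_neg_distrib, ← Finset.sum_add_distrib]
  exact Finset.sum_congr rfl fun i _ => by ring

theorem sum_gridChar_mul_conj (hN : 0 < N) (x x' : Fin d → Fin N) :
    ∑ k : Fin d → Fin N, gridChar N k (gridPoint x) * conj (gridChar N k (gridPoint x')) =
      if x = x' then (N : ℂ) ^ d else 0 := by
  simp_rw [gridChar_mul_conj]
  rw [← Fintype.prod_sum fun i (m : Fin N) => Complex.exp (Complex.I *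
    (((gridPoint x' i - gridPoint x i : ℤ) * (2 * π * m / N) : ℝ) : ℂ))]
  simp_rw [gridPoint, sum_fin_exp_int_mul hN, Fin.natCast_dvd_val_sub_val_iff,
    Fintype.prod_ite_zero, ← funext_iff, Finset.prod_const, Finset.card_univ, Fintype.card_fin]

theorem sum_mul_conj_eq_sum_dft (hN : 0 < N) (u v : (Fin d → ℤ) → ℂ) :
    ∑ x : Fin d → Fin N, u (gridPoint x) * conj (v (gridPoint x)) =
      (N : ℂ) ^ d * ∑ k, dft N u k * conj (dft N v k) := by
  have hN' : (N : ℂ) ^ d ≠ 0 := pow_ne_zero _ (Nat.cast_ne_zero.2 hN.ne')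
  have expand : ∀ k, dft N u k * conj (dft N v k) = ((N : ℂ) ^ d)⁻¹ * ((N : ℂ) ^ d)⁻¹ *
      ∑ x : Fin d → Fin N, ∑ x' : Fin d → Fin N, u (gridPoint x) * conj (v (gridPoint x')) *
        (gridChar N k (gridPoint x) * conj (gridChar N k (gridPoint x'))) := by
    intro k
    simp only [dft, map_mul, map_sum, map_inv₀, map_pow, map_natCast]
    rw [mul_mul_mul_comm, Finset.sum_mul_sum]
    congr 1
    refine Finset.sum_congr rfl fun x _ => Finset.sum_congr rfl fun x' _ => ?_
    ring
  have diagonal : ∀ x : Fin d → Fin N, ∑ k : Fin d → Fin N, ∑ x' : Fin d → Fin N,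
      u (gridPoint x) * conj (v (gridPoint x')) *
        (gridChar N k (gridPoint x) * conj (gridChar N k (gridPoint x'))) =
      (N : ℂ) ^ d * (u (gridPoint x) * conj (v (gridPoint x))) := by
    intro x
    rw [Finset.sum_comm]
    simp_rw [← Finset.mul_sum, sum_gridChar_mul_conj hN, mul_ite, mul_zero, Finset.sum_ite_eq,
      Finset.mem_univ, if_true, mul_comm]
  simp_rw [expand, ← Finset.mul_sum]
  rw [Finset.sum_comm]
  simp_rw [diagonal, ← Finset.mul_sum]
  field_simp

-- Reducing coordinates mod `N` identifies periodic functions with functions on `(ℤ/N)^d`,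
-- where translation by `ρ` permutes the cube.
open Fin.CommRing in
theorem sum_gridPoint_add_of_periodic (hN : 0 < N) {M : Type*} [AddCommMonoid M]
    (g : (Fin d → ℤ) → M) (hg : ∀ w z : Fin d → ℤ, g (w + N • z) = g w) (ρ : Fin d → ℤ) :
    ∑ x : Fin d → Fin N, g (gridPoint x + ρ) = ∑ x : Fin d → Fin N, g (gridPoint x) := by
  have : NeZero N := ⟨hN.ne'⟩
  have reduce : ∀ w, g w = g (gridPoint fun i => (w i : Fin N)) := by
    intro w
    conv_rhs => rw [← hg _ fun i => w i / N]
    congr 1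
    funext i
    have := Int.emod_nonneg (w i) (Int.natCast_ne_zero.2 hN.ne')
    simp [gridPoint, Int.toNat_of_nonneg this, Int.emod_add_mul_ediv]
  have hshift : ∀ x : Fin d → Fin N,
      (fun i => ((gridPoint x + ρ) i : Fin N)) = x + fun i => (ρ i : Fin N) := by
    intro x
    funext i
    simp [gridPoint]
  simp_rw [reduce (gridPoint _ + ρ), hshift]
  exact Fintype.sum_equiv (Equiv.addRight _) _ _ fun x => rfl

theorem dft_comp_add_of_periodic (hN : 0 < N) (u : (Fin d → ℤ) → ℂ)
    (hu : ∀ w z : Fin d → ℤ, u (w + N • z) = u w) (ρ : Fin d → ℤ) (k : Fin d → Fin N) :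
    dft N (fun w => u (w + ρ)) k =
      Complex.exp (Complex.I * ipk d ρ (dualPoint N k)) * dft N u k := by
  have hρ : Complex.exp (Complex.I * ipk d ρ (dualPoint N k)) = (gridChar N k ρ)⁻¹ := by
    rw [gridChar, Complex.exp_neg, inv_inv]
  have hg : ∀ w z : Fin d → ℤ, u (w + N • z) * gridChar N k (w + N • z) = u w * gridChar N k w :=
    fun w z => by rw [hu, gridChar_add, gridChar_nsmul hN, mul_one]
  have hterm : ∀ x : Fin d → Fin N, u (gridPoint x + ρ) * gridChar N k (gridPoint x) =
      (gridChar N k ρ)⁻¹ * (u (gridPoint x + ρ) * gridChar N k (gridPoint x + ρ)) := by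
    intro x
    rw [gridChar_add]
    field_simp [gridChar, Complex.exp_ne_zero]
  simp only [dft, hterm, ← Finset.mul_sum, hρ,
    sum_gridPoint_add_of_periodic hN (fun w => u w * gridChar N k w) hg]
  ring

theorem dft_sub (u v : (Fin d → ℤ) → ℂ) (k : Fin d → Fin N) :
    dft N (fun w => u w - v w) k = dft N u k - dft N v k := by
  simp only [dft, sub_mul, Finset.sum_sub_distrib, mul_sub]

end Fourier

def diffSymbol {d : ℕ} (ρ : Fin d → ℤ) (k : Fin d → ℝ) : ℂ :=
  Complex.exp (Complex.I * ipk d ρ k) - 1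

section diffSymbol

variable {d : ℕ} (ρ : Fin d → ℤ) (k : Fin d → ℝ)

theorem diffSymbol_eq_cos_sin : diffSymbol ρ k =
    ((Real.cos (ipk d ρ k) - 1 : ℝ) : ℂ) + Complex.I * ((Real.sin (ipk d ρ k) : ℝ) : ℂ) := by
  rw [diffSymbol, mul_comm, Complex.exp_mul_I, ← Complex.ofReal_cos, ← Complex.ofReal_sin]
  push_cast
  ring

theorem conj_diffSymbol : conj (diffSymbol ρ k) = diffSymbol ρ (-k) := by
  simp only [diffSymbol, map_sub, map_one, ← Complex.exp_conj, map_mul, Complex.conj_I,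
    Complex.conj_ofReal, ipk_neg_right, Complex.ofReal_neg, neg_mul, mul_neg]

theorem conj_diffSymbol_eq_cos_sin : conj (diffSymbol ρ k) =
    ((Real.cos (ipk d ρ k) - 1 : ℝ) : ℂ) - Complex.I * ((Real.sin (ipk d ρ k) : ℝ) : ℂ) := by
  rw [conj_diffSymbol, diffSymbol_eq_cos_sin, ipk_neg_right, Real.cos_neg, Real.sin_neg]
  push_cast
  ring

theorem diffSymbol_neg_right : diffSymbol ρ (-k) = diffSymbol (-ρ) k := by
  rw [diffSymbol, diffSymbol, ipk_neg_right, ipk_neg_left]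

theorem diffSymbol_add_two_pi_mul (m : Fin d → ℤ) :
    diffSymbol ρ (fun i => k i + 2 * π * m i) = diffSymbol ρ k := by
  rw [diffSymbol, diffSymbol, ipk_add_two_pi_mul_right, Complex.ofReal_add, mul_add,
    Complex.exp_add, exp_I_mul_int_mul_two_pi, mul_one]

end diffSymbol

theorem dft_diff_of_periodic {d N : ℕ} (hN : 0 < N) (u : (Fin d → ℤ) → ℂ)
    (hu : ∀ w z : Fin d → ℤ, u (w + N • z) = u w) (ρ : Fin d → ℤ) (k : Fin d → Fin N) :
    dft N (fun w => u (w + ρ) - u w) k = diffSymbol ρ (dualPoint N k) * dft N u k := by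
  rw [dft_sub (fun w => u (w + ρ)), dft_comp_add_of_periodic hN u hu, diffSymbol, sub_one_mul]

section Hmat

variable {d : ℕ} {R : Finset (Fin d → ℤ)} (K : Fin d → ↥R → Fin d → ↥R → ℝ)

theorem Hmat_apply (k : Fin d → ℝ) (j l : Fin d) :
    Hmat d R K k j l = ∑ ρ : ↥R, ∑ σ : ↥R,
      (K j ρ l σ : ℂ) * diffSymbol ρ.1 k * conj (diffSymbol σ.1 k) := by
  simp only [conj_diffSymbol_eq_cos_sin]
  simp only [Hmat, diffSymbol_eq_cos_sin]

theorem Hmat_re (k : Fin d → ℝ) (j l : Fin d) :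
    (Hmat d R K k j l).re = ∑ ρ : ↥R, ∑ σ : ↥R, K j ρ l σ *
      ((Real.cos (ipk d ρ.1 k) - 1) * (Real.cos (ipk d σ.1 k) - 1) +
        Real.sin (ipk d ρ.1 k) * Real.sin (ipk d σ.1 k)) := by
  simp only [Hmat, Complex.re_sum, Complex.mul_re, Complex.mul_im, Complex.add_re,
    Complex.add_im, Complex.sub_re, Complex.sub_im, Complex.ofReal_re, Complex.ofReal_im,
    Complex.I_re, Complex.I_im]
  exact Finset.sum_congr rfl fun ρ _ => Finset.sum_congr rfl fun σ _ => by ring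

theorem Hmat_isHermitian (hsym : ∀ j ρ l σ, K j ρ l σ = K l σ j ρ) (k : Fin d → ℝ) :
    (Hmat d R K k).IsHermitian := by
  ext j l
  simp only [Matrix.conjTranspose_apply, Hmat_apply, star_sum, Complex.star_def, map_mul,
    Complex.conj_ofReal, Complex.conj_conj]
  rw [Finset.sum_comm]
  exact Finset.sum_congr rfl fun σ _ => Finset.sum_congr rfl fun ρ _ => by rw [hsym]; ring

theorem Hmat_add_two_pi_mul (k : Fin d → ℝ) (m : Fin d → ℤ) :
    Hmat d R K (fun i => k i + 2 * π * m i) = Hmat d R K k := by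
  ext j l
  simp only [Hmat_apply, diffSymbol_add_two_pi_mul]

theorem Hmat_map_conj (k : Fin d → ℝ) :
    (Hmat d R K k).map (starRingEnd ℂ) = Hmat d R K (-k) := by
  ext j l
  simp only [Matrix.map_apply, Hmat_apply, map_sum, map_mul, Complex.conj_ofReal,
    conj_diffSymbol]

theorem Hmat_neg (hneg : ∀ ρ ∈ R, -ρ ∈ R)
    (hK : ∀ (j l : Fin d) (ρ σ : ↥R),
      K j ρ l σ = K j ⟨-ρ.1, hneg ρ.1 ρ.2⟩ l ⟨-σ.1, hneg σ.1 σ.2⟩) (k : Fin d → ℝ) :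
    Hmat d R K (-k) = Hmat d R K k := by
  let e : ↥R ≃ ↥R := (Equiv.neg _).subtypeEquiv fun ρ =>
    ⟨hneg ρ, fun h => by simpa using hneg _ h⟩
  ext j l
  simp only [Hmat_apply, diffSymbol_neg_right]
  rw [← e.sum_comp]
  refine Finset.sum_congr rfl fun ρ _ => ?_
  rw [← e.sum_comp]
  refine Finset.sum_congr rfl fun σ _ => ?_
  simp [e, ← hK]

-- `H(k) = H(-k) = conj H(k)`.
theorem Hmat_apply_eq_ofReal (hneg : ∀ ρ ∈ R, -ρ ∈ R)
    (hK : ∀ (j l : Fin d) (ρ σ : ↥R),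
      K j ρ l σ = K j ⟨-ρ.1, hneg ρ.1 ρ.2⟩ l ⟨-σ.1, hneg σ.1 σ.2⟩) (k : Fin d → ℝ) (j l : Fin d) :
    Hmat d R K k j l = ((Hmat d R K k j l).re : ℂ) := by
  have hconj := congrFun₂ (Hmat_map_conj K k) j l
  rw [Hmat_neg K hneg hK, Matrix.map_apply] at hconj
  exact (Complex.conj_eq_iff_re.1 hconj).symm

end Hmat

theorem sum_diff_quadForm_eq_sum_dft {d N : ℕ} (hN : 0 < N) (R : Finset (Fin d → ℤ))
    (K : Fin d → ↥R → Fin d → ↥R → ℝ) (y : (Fin d → ℤ) → (Fin d → ℝ))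
    (hper : ∀ x z : Fin d → ℤ, y (x + N • z) = y x) :
    (((∑ x : Fin d → Fin N, ∑ j, ∑ l, ∑ ρ : ↥R, ∑ σ : ↥R,
        K j ρ l σ * (y (gridPoint x + ρ.1) j - y (gridPoint x) j) *
          (y (gridPoint x + σ.1) l - y (gridPoint x) l) : ℝ)) : ℂ) =
      (N : ℂ) ^ d * ∑ k : Fin d → Fin N, ∑ j, ∑ l,
        dft N (fun w => (y w j : ℂ)) k * Hmat d R K (dualPoint N k) j l *
          conj (dft N (fun w => (y w l : ℂ)) k) := by
  have hdiff : ∀ j (ρ : Fin d → ℤ) k, dft N (fun w => ((y (w + ρ) j - y w j : ℝ) : ℂ)) k =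
      diffSymbol ρ (dualPoint N k) * dft N (fun w => (y w j : ℂ)) k := by
    intro j ρ k
    push_cast
    exact dft_diff_of_periodic hN (fun w => (y w j : ℂ)) (fun w z => by rw [hper]) ρ k
  have hpair : ∀ j l (ρ σ : Fin d → ℤ), ∑ x : Fin d → Fin N,
      ((y (gridPoint x + ρ) j - y (gridPoint x) j : ℝ) : ℂ) *
        ((y (gridPoint x + σ) l - y (gridPoint x) l : ℝ) : ℂ) =
      (N : ℂ) ^ d * ∑ k, diffSymbol ρ (dualPoint N k) * dft N (fun w => (y w j : ℂ)) k *
        conj (diffSymbol σ (dualPoint N k) * dft N (fun w => (y w l : ℂ)) k) := by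
    intro j l ρ σ
    have := sum_mul_conj_eq_sum_dft hN (fun w => ((y (w + ρ) j - y w j : ℝ) : ℂ))
      (fun w => ((y (w + σ) l - y w l : ℝ) : ℂ))
    simpa only [Complex.conj_ofReal, hdiff] using this
  calc _ = ∑ j, ∑ l, ∑ ρ : ↥R, ∑ σ : ↥R, (K j ρ l σ : ℂ) * ∑ x : Fin d → Fin N,
        ((y (gridPoint x + ρ.1) j - y (gridPoint x) j : ℝ) : ℂ) *
          ((y (gridPoint x + σ.1) l - y (gridPoint x) l : ℝ) : ℂ) := by
        simp only [Complex.ofReal_sum, Complex.ofReal_mul, Finset.mul_sum, mul_assoc,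
          Finset.sum_comm (s := (Finset.univ : Finset (Fin d → Fin N)))]
    _ = _ := by
        simp only [hpair, Hmat_apply, Finset.mul_sum, Finset.sum_mul,
          Finset.sum_comm (t := (Finset.univ : Finset (Fin d → Fin N)))]
        refine Finset.sum_congr rfl fun k _ => Finset.sum_congr rfl fun j _ =>
          Finset.sum_congr rfl fun l _ => Finset.sum_congr rfl fun ρ _ =>
            Finset.sum_congr rfl fun σ _ => ?_
        rw [map_mul]
        ring

theorem fourier_diagonalization_general
    (d N : ℕ) (hN : 0 < N)
    (R : Finset (Fin d → ℤ))
    (hneg : ∀ ρ ∈ R, -ρ ∈ R)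
    (K : Fin d → ↥R → Fin d → ↥R → ℝ)
    (hsym : ∀ j ρ l σ, K j ρ l σ = K l σ j ρ)
    (y : (Fin d → ℤ) → (Fin d → ℝ))
    (hper : ∀ x z : Fin d → ℤ, y (x + N • z) = y x) :
    ((((∑ x : Fin d → Fin N, ∑ j, ∑ l, ∑ ρ : ↥R, ∑ σ : ↥R,
        K j ρ l σ * (y ((fun i => (x i : ℤ)) + ρ.1) j - y (fun i => (x i : ℤ)) j) *
          (y ((fun i => (x i : ℤ)) + σ.1) l - y (fun i => (x i : ℤ)) l) : ℝ)) : ℂ) =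
      ((N : ℂ)) ^ d * ∑ k : Fin d → Fin N, ∑ j, ∑ l,
        (((((N : ℂ)) ^ d)⁻¹ * ∑ x : Fin d → Fin N,
            ((y (fun i => (x i : ℤ)) j : ℝ) : ℂ) *
              Complex.exp (-(Complex.I *
                ((∑ i, (x i : ℝ) * (2 * π * (k i : ℝ) / N) : ℝ) : ℂ)))) *
          Hmat d R K (fun i => 2 * π * (k i : ℝ) / N) j l *
          (starRingEnd ℂ) ((((N : ℂ)) ^ d)⁻¹ * ∑ x : Fin d → Fin N,
            ((y (fun i => (x i : ℤ)) l : ℝ) : ℂ) *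
              Complex.exp (-(Complex.I *
                ((∑ i, (x i : ℝ) * (2 * π * (k i : ℝ) / N) : ℝ) : ℂ)))))) ∧
    (∀ k : Fin d → ℝ, (Hmat d R K k).IsHermitian) ∧
    (∀ (k : Fin d → ℝ) (m : Fin d → ℤ),
      Hmat d R K (fun i => k i + 2 * π * (m i : ℝ)) = Hmat d R K k) ∧
    (∀ k : Fin d → ℝ, (Hmat d R K k).map (starRingEnd ℂ) = Hmat d R K (-k)) ∧
    ((∀ (j l : Fin d) (ρ σ : ↥R),
        K j ρ l σ = K j ⟨-ρ.1, hneg ρ.1 ρ.2⟩ l ⟨-σ.1, hneg σ.1 σ.2⟩) →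
      ∀ (k : Fin d → ℝ) (j l : Fin d),
        Hmat d R K k j l =
          (((∑ ρ : ↥R, ∑ σ : ↥R, K j ρ l σ *
              ((Real.cos (ipk d ρ.1 k) - 1) * (Real.cos (ipk d σ.1 k) - 1) +
                Real.sin (ipk d ρ.1 k) * Real.sin (ipk d σ.1 k)) : ℝ)) : ℂ) ∧
        Hmat d R K k j l = Hmat d R K k l j) := by
  refine ⟨?_, Hmat_isHermitian K hsym, Hmat_add_two_pi_mul K, Hmat_map_conj K,
    fun hK k j l => ⟨?_, ?_⟩⟩
  · have key := sum_diff_quadForm_eq_sum_dft hN R K y hper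
    simp only [dft, gridChar_gridPoint] at key
    exact key
  · rw [Hmat_apply_eq_ofReal K hneg hK, Hmat_re]
  · rw [← (Hmat_isHermitian K hsym k).apply j l, Hmat_apply_eq_ofReal K hneg hK k l j]
    exact Complex.conj_ofReal _

/-- Fourier diagonalization of the discrete quadratic form: for a
symmetric `K` and `[0,N)^d`-periodic `y`,
`Σ_x K[Dy(x),Dy(x)] = N^d Σ_k ŷ(k)ᵀ H(k) conj(ŷ(k))`; moreover `H(k)` is
Hermitian, `2π`-periodic, `conj H(k) = H(−k)`, and under the additional
symmetry `K_{jρlσ} = K_{j(−ρ)l(−σ)}` it is real symmetric with the stated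
formula. -/
theorem fourier_diagonalization
    (d N : ℕ) (hd : 0 < d) (hN : 0 < N)
    (R : Finset (Fin d → ℤ)) (h0 : (0 : Fin d → ℤ) ∉ R)
    (hneg : ∀ ρ ∈ R, -ρ ∈ R)
    (K : Fin d → ↥R → Fin d → ↥R → ℝ)
    (hsym : ∀ j ρ l σ, K j ρ l σ = K l σ j ρ)
    (y : (Fin d → ℤ) → (Fin d → ℝ))
    (hper : ∀ x z : Fin d → ℤ, y (x + N • z) = y x) :
    ((((∑ x : Fin d → Fin N, ∑ j, ∑ l, ∑ ρ : ↥R, ∑ σ : ↥R,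
        K j ρ l σ * (y ((fun i => (x i : ℤ)) + ρ.1) j - y (fun i => (x i : ℤ)) j) *
          (y ((fun i => (x i : ℤ)) + σ.1) l - y (fun i => (x i : ℤ)) l) : ℝ)) : ℂ) =
      ((N : ℂ)) ^ d * ∑ k : Fin d → Fin N, ∑ j, ∑ l,
        (((((N : ℂ)) ^ d)⁻¹ * ∑ x : Fin d → Fin N,
            ((y (fun i => (x i : ℤ)) j : ℝ) : ℂ) *
              Complex.exp (-(Complex.I *
                ((∑ i, (x i : ℝ) * (2 * π * (k i : ℝ) / N) : ℝ) : ℂ)))) *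
          Hmat d R K (fun i => 2 * π * (k i : ℝ) / N) j l *
          (starRingEnd ℂ) ((((N : ℂ)) ^ d)⁻¹ * ∑ x : Fin d → Fin N,
            ((y (fun i => (x i : ℤ)) l : ℝ) : ℂ) *
              Complex.exp (-(Complex.I *
                ((∑ i, (x i : ℝ) * (2 * π * (k i : ℝ) / N) : ℝ) : ℂ)))))) ∧
    (∀ k : Fin d → ℝ, (Hmat d R K k).IsHermitian) ∧
    (∀ (k : Fin d → ℝ) (m : Fin d → ℤ),
      Hmat d R K (fun i => k i + 2 * π * (m i : ℝ)) = Hmat d R K k) ∧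
    (∀ k : Fin d → ℝ, (Hmat d R K k).map (starRingEnd ℂ) = Hmat d R K (-k)) ∧
    ((∀ (j l : Fin d) (ρ σ : ↥R),
        K j ρ l σ = K j ⟨-ρ.1, hneg ρ.1 ρ.2⟩ l ⟨-σ.1, hneg σ.1 σ.2⟩) →
      ∀ (k : Fin d → ℝ) (j l : Fin d),
        Hmat d R K k j l =
          (((∑ ρ : ↥R, ∑ σ : ↥R, K j ρ l σ *
              ((Real.cos (ipk d ρ.1 k) - 1) * (Real.cos (ipk d σ.1 k) - 1) +
                Real.sin (ipk d ρ.1 k) * Real.sin (ipk d σ.1 k)) : ℝ)) : ℂ) ∧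
        Hmat d R K k j l = Hmat d R K k l j) :=
  fourier_diagonalization_general d N hN R hneg K hsym y hper

end
end

section
/- Quantitative implicit function theorem: Let X be Banach, Y, Z normed, U ⊂ X, V ⊂ Y open, F : U×V → Z Fréchet differentiable, ∂_u F(0,0) invertible. Suppose there are ρ,τ,κ₁,κ₂,κ₃ > 0 and a function ω : [0,∞)² → [0,∞] nondecreasing in both variables with closed balls B̄_ρ(0) ⊂ U, B̄_τ(0) ⊂ V such that ‖F(0,0)‖ ≤ κ₁, ‖∂_u F(0,0)^{-1}‖ ≤ κ₂, ‖∂_h F(u,h)‖ ≤ κ₃ and ‖∂_u F(0,0) − ∂_u F(u,h)‖ ≤ ω(‖u‖,‖h‖) on B̄_ρ(0)×B̄_τ(0), κ₂ω(ρ,τ) < 1, and κ₂(κ₁ + κ₃τ + ∫₀^ρ ω(t, (τ/ρ)t)dt) ≤ ρ. Then for every h ∈ B̄_τ(0) there is a unique u ∈ B̄_ρ(0) with F(u,h) = 0. -/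
/-!
For fixed `h`, the zeros of `F(·, h)` are the fixed points of the simplified Newton map
`G_h u = u - A⁻¹ F(u, h)`. Its derivative `A⁻¹ (A - ∂_u F(u, h))` has norm at most
`κ₂ ω(ρ, τ) < 1` on `B̄_ρ(0)`, so `G_h` contracts there. It also maps `B̄_ρ(0)` into itself:
along the ray `t ↦ t • (u, h)`, the curve `t ↦ t u - A⁻¹ F(t u, t h)` runs from `-A⁻¹ F(0, 0)`
to `G_h u` with speed at most `κ₂ (ρ ω(t ρ, t τ) + κ₃ τ)`, and integrating this over `[0, 1]`
gives exactly the left-hand side of the smallness condition. Banach's fixed point theorem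
concludes.
-/

open Metric MeasureTheory Set ContinuousLinearMap

theorem exists_unique_fixedPoint_of_mapsTo_of_dist_le {α : Type*} [MetricSpace α]
    {f : α → α} {s : Set α} (hsc : IsComplete s) (hs : s.Nonempty) (hsf : MapsTo f s s)
    {K : ℝ} (hK : K < 1) (hf : ∀ x ∈ s, ∀ y ∈ s, dist (f x) (f y) ≤ K * dist x y) :
    ∃! x, x ∈ s ∧ f x = x := by
  obtain ⟨x₀, hx₀⟩ := hs
  have hcontr : ContractingWith (Real.toNNReal K) (hsf.restrict f s s) :=
    ⟨by simpa using hK, LipschitzWith.of_dist_le' fun x y => hf x x.2 y y.2⟩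
  obtain ⟨x, hxs, hfx, -⟩ := hcontr.exists_fixedPoint' hsc hsf hx₀ (edist_ne_top _ _)
  refine ⟨x, ⟨hxs, hfx⟩, fun y ⟨hys, hfy⟩ => dist_le_zero.1 ?_⟩
  have := hf y hys x hxs
  rw [hfy, hfx.eq] at this
  nlinarith [dist_nonneg (x := y) (y := x)]

theorem norm_sub_le_integral_of_norm_hasDerivAt_le {E : Type*} [NormedAddCommGroup E]
    [NormedSpace ℝ E] [CompleteSpace E] {c c' : ℝ → E} {φ : ℝ → ℝ} {a b : ℝ} (hab : a ≤ b)
    (hc : ∀ t ∈ Icc a b, HasDerivAt c (c' t) t) (hcφ : ∀ t ∈ Icc a b, ‖c' t‖ ≤ φ t)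
    (hφ : IntervalIntegrable φ volume a b) :
    ‖c b - c a‖ ≤ ∫ t in a..b, φ t := by
  have hderiv : ∀ t ∈ Icc a b, deriv c t = c' t := fun t ht => (hc t ht).deriv
  have hbound : ∀ t ∈ Ioc a b, ‖deriv c t‖ ≤ φ t := fun t ht => by
    rw [hderiv t (Ioc_subset_Icc_self ht)]
    exact hcφ t (Ioc_subset_Icc_self ht)
  have hint : IntervalIntegrable (deriv c) volume a b := by
    refine hφ.mono_fun' (aestronglyMeasurable_deriv c _) ?_
    rw [uIoc_of_le hab]
    exact (ae_restrict_iff' measurableSet_Ioc).2 (ae_of_all _ hbound)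
  rw [← intervalIntegral.integral_eq_sub_of_hasDerivAt _ hint]
  · exact intervalIntegral.norm_integral_le_of_norm_le hab (ae_of_all _ hbound) hφ
  · intro t ht
    rw [uIcc_of_le hab] at ht
    exact hderiv t ht ▸ hc t ht

section SimplifiedNewtonMap

variable {X Y Z : Type*} [NormedAddCommGroup X] [NormedSpace ℝ X]
  [NormedAddCommGroup Y] [NormedSpace ℝ Y] [NormedAddCommGroup Z] [NormedSpace ℝ Z]

def simplifiedNewtonMap (A : X ≃L[ℝ] Z) (f : X → Z) (u : X) : X := u - A.symm (f u)

variable {A : X ≃L[ℝ] Z}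

theorem simplifiedNewtonMap_eq_self_iff {f : X → Z} {u : X} :
    simplifiedNewtonMap A f u = u ↔ f u = 0 := by
  simp [simplifiedNewtonMap]

theorem hasFDerivAt_simplifiedNewtonMap {f : X → Z} {f' : X →L[ℝ] Z} {u : X}
    (hf : HasFDerivAt f f' u) :
    HasFDerivAt (simplifiedNewtonMap A f) ((A.symm : Z →L[ℝ] X) ∘L ((A : X →L[ℝ] Z) - f')) u := by
  refine ((hasFDerivAt_id u).sub ((A.symm : Z →L[ℝ] X).hasFDerivAt.comp u hf)).congr_fderiv ?_
  ext
  simp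

theorem dist_simplifiedNewtonMap_le {f : X → Z} {f' : X → X →L[ℝ] Z} {s : Set X} {κ C : ℝ}
    (hs : Convex ℝ s) (hf : ∀ u ∈ s, HasFDerivAt f (f' u) u)
    (hA : ‖(A.symm : Z →L[ℝ] X)‖ ≤ κ) (hC : ∀ u ∈ s, ‖(A : X →L[ℝ] Z) - f' u‖ ≤ C) :
    ∀ u ∈ s, ∀ v ∈ s,
      dist (simplifiedNewtonMap A f u) (simplifiedNewtonMap A f v) ≤ κ * C * dist u v := by
  intro u hu v hv
  rw [dist_eq_norm, dist_eq_norm]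
  refine hs.norm_image_sub_le_of_norm_hasFDerivWithin_le
    (fun w hw => (hasFDerivAt_simplifiedNewtonMap (hf w hw)).hasFDerivWithinAt) (fun w hw => ?_)
    hv hu
  exact (opNorm_comp_le _ _).trans
    (mul_le_mul hA (hC w hw) (norm_nonneg _) ((norm_nonneg _).trans hA))

theorem norm_sub_symm_apply_le (L : X × Y →L[ℝ] Z) {u : X} {h : Y} {κ₂ W κ₃ ρ τ : ℝ}
    (hA : ‖(A.symm : Z →L[ℝ] X)‖ ≤ κ₂) (hW : ‖(A : X →L[ℝ] Z) - L ∘L inl ℝ X Y‖ ≤ W)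
    (hL : ‖L ∘L inr ℝ X Y‖ ≤ κ₃) (hu : ‖u‖ ≤ ρ) (hh : ‖h‖ ≤ τ) :
    ‖u - A.symm (L (u, h))‖ ≤ κ₂ * (W * ρ + κ₃ * τ) := by
  have hsplit : u - A.symm (L (u, h)) =
      A.symm (((A : X →L[ℝ] Z) - L ∘L inl ℝ X Y) u - (L ∘L inr ℝ X Y) h) := by
    rw [← comp_inl_add_comp_inr L (u, h)]
    simp [sub_sub]
  rw [hsplit]
  refine (A.symm : Z →L[ℝ] X).le_of_opNorm_le_of_le hA ((norm_sub_le _ _).trans ?_)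
  exact add_le_add (le_of_opNorm_le_of_le _ hW hu) (le_of_opNorm_le_of_le _ hL hh)

theorem hasDerivAt_sub_symm_apply_smul {F : X × Y → Z} {L : X × Y →L[ℝ] Z} (u : X) (h : Y)
    {t : ℝ} (hF : HasFDerivAt F L (t • u, t • h)) :
    HasDerivAt (fun s : ℝ => s • u - A.symm (F (s • u, s • h))) (u - A.symm (L (u, h))) t := by
  have hu : HasDerivAt (fun s : ℝ => s • u) u t := by
    simpa using (hasDerivAt_id t).smul_const u
  have hh : HasDerivAt (fun s : ℝ => s • h) h t := by
    simpa using (hasDerivAt_id t).smul_const h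
  exact hu.sub ((A.symm : Z →L[ℝ] X).hasFDerivAt.comp_hasDerivAt t
    (hF.comp_hasDerivAt t (hu.prodMk hh)))

end SimplifiedNewtonMap

section SelfMap

variable {X Y Z : Type*} [NormedAddCommGroup X] [NormedSpace ℝ X] [CompleteSpace X]
  [NormedAddCommGroup Y] [NormedSpace ℝ Y] [NormedAddCommGroup Z] [NormedSpace ℝ Z]
  {F : X × Y → Z} {DF : X × Y → (X × Y →L[ℝ] Z)} {A : X ≃L[ℝ] Z}
  {ρ τ κ₁ κ₂ κ₃ : ℝ} {ω : ℝ → ℝ → ℝ}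

theorem intervalIntegrable_modulus_along_ray
    (hωmono : ∀ s s' t t', 0 ≤ s → s ≤ s' → 0 ≤ t → t ≤ t' → ω s t ≤ ω s' t')
    (hρ : 0 < ρ) (hτ : 0 ≤ τ) :
    IntervalIntegrable (fun t => ω (ρ * t) (τ / ρ * (ρ * t))) volume 0 1 := by
  refine MonotoneOn.intervalIntegrable fun a ha b _ hab => ?_
  rw [uIcc_of_le zero_le_one] at ha
  have hρa : 0 ≤ ρ * a := mul_nonneg hρ.le ha.1
  have hρab : ρ * a ≤ ρ * b := mul_le_mul_of_nonneg_left hab hρ.le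
  have hτρ : 0 ≤ τ / ρ := div_nonneg hτ hρ.le
  exact hωmono _ _ _ _ hρa hρab (mul_nonneg hτρ hρa) (mul_le_mul_of_nonneg_left hρab hτρ)

theorem integral_modulus_along_ray_eq
    (hint : IntervalIntegrable (fun t => ω (ρ * t) (τ / ρ * (ρ * t))) volume 0 1) :
    ∫ t in (0 : ℝ)..1, κ₂ * (ω (ρ * t) (τ / ρ * (ρ * t)) * ρ + κ₃ * τ) =
      κ₂ * (κ₃ * τ + ∫ t in (0 : ℝ)..ρ, ω t (τ / ρ * t)) := by
  have hcov : ρ * ∫ t in (0 : ℝ)..1, ω (ρ * t) (τ / ρ * (ρ * t)) =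
      ∫ t in (0 : ℝ)..ρ, ω t (τ / ρ * t) := by
    simpa using intervalIntegral.smul_integral_comp_mul_left (a := 0) (b := 1)
      (fun s => ω s (τ / ρ * s)) ρ
  rw [intervalIntegral.integral_const_mul,
    intervalIntegral.integral_add (hint.mul_const ρ) intervalIntegrable_const,
    intervalIntegral.integral_mul_const, intervalIntegral.integral_const, ← hcov, sub_zero,
    one_smul]
  ring

theorem norm_simplifiedNewtonMap_le
    (hF : ∀ p ∈ closedBall (0 : X) ρ ×ˢ closedBall (0 : Y) τ, HasFDerivAt F (DF p) p)
    (hκ₁ : ‖F (0, 0)‖ ≤ κ₁) (hκ₂ : ‖(A.symm : Z →L[ℝ] X)‖ ≤ κ₂)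
    (hκ₃ : ∀ u h, ‖u‖ ≤ ρ → ‖h‖ ≤ τ → ‖(DF (u, h)).comp (inr ℝ X Y)‖ ≤ κ₃)
    (hω : ∀ u h, ‖u‖ ≤ ρ → ‖h‖ ≤ τ →
      ‖(A : X →L[ℝ] Z) - (DF (u, h)).comp (inl ℝ X Y)‖ ≤ ω ‖u‖ ‖h‖)
    (hωmono : ∀ s s' t t', 0 ≤ s → s ≤ s' → 0 ≤ t → t ≤ t' → ω s t ≤ ω s' t')
    (hρ : 0 < ρ) {u : X} {h : Y} (hu : ‖u‖ ≤ ρ) (hh : ‖h‖ ≤ τ) :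
    ‖simplifiedNewtonMap A (fun v => F (v, h)) u‖ ≤
      κ₂ * (κ₁ + κ₃ * τ + ∫ t in (0 : ℝ)..ρ, ω t (τ / ρ * t)) := by
  set c : ℝ → X := fun t => t • u - A.symm (F (t • u, t • h))
  set φ : ℝ → ℝ := fun t => κ₂ * (ω (ρ * t) (τ / ρ * (ρ * t)) * ρ + κ₃ * τ)
  have hray : ∀ t ∈ Icc (0 : ℝ) 1, ‖t • u‖ ≤ ρ * t ∧ ‖t • h‖ ≤ τ / ρ * (ρ * t) := by
    intro t ht
    have hτt : τ / ρ * (ρ * t) = t * τ := by field_simp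
    rw [norm_smul, norm_smul, Real.norm_of_nonneg ht.1, hτt, mul_comm ρ]
    exact ⟨mul_le_mul_of_nonneg_left hu ht.1, mul_le_mul_of_nonneg_left hh ht.1⟩
  have hmem : ∀ t ∈ Icc (0 : ℝ) 1, ‖t • u‖ ≤ ρ ∧ ‖t • h‖ ≤ τ := by
    intro t ht
    rw [norm_smul, norm_smul, Real.norm_of_nonneg ht.1]
    exact ⟨(mul_le_of_le_one_left (norm_nonneg u) ht.2).trans hu,
      (mul_le_of_le_one_left (norm_nonneg h) ht.2).trans hh⟩
  have hc : ∀ t ∈ Icc (0 : ℝ) 1,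
      HasDerivAt c (u - A.symm (DF (t • u, t • h) (u, h))) t := fun t ht =>
    hasDerivAt_sub_symm_apply_smul u h (hF _
      ⟨mem_closedBall_zero_iff.2 (hmem t ht).1, mem_closedBall_zero_iff.2 (hmem t ht).2⟩)
  have hcφ : ∀ t ∈ Icc (0 : ℝ) 1, ‖u - A.symm (DF (t • u, t • h) (u, h))‖ ≤ φ t := by
    intro t ht
    obtain ⟨hu', hh'⟩ := hmem t ht
    obtain ⟨hρt, hτt⟩ := hray t ht
    exact norm_sub_symm_apply_le _ hκ₂
      ((hω _ _ hu' hh').trans (hωmono _ _ _ _ (norm_nonneg _) hρt (norm_nonneg _) hτt))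
      (hκ₃ _ _ hu' hh') hu hh
  have hint := intervalIntegrable_modulus_along_ray hωmono hρ ((norm_nonneg h).trans hh)
  have hφ : IntervalIntegrable φ volume 0 1 :=
    ((hint.mul_const ρ).add intervalIntegrable_const).const_mul κ₂
  have hc0 : ‖c 0‖ ≤ κ₂ * κ₁ := by
    simpa [c] using le_of_opNorm_le_of_le _ hκ₂ hκ₁
  calc ‖simplifiedNewtonMap A (fun v => F (v, h)) u‖ = ‖(c 1 - c 0) + c 0‖ := by
        simp [c, simplifiedNewtonMap]
    _ ≤ ‖c 1 - c 0‖ + ‖c 0‖ := norm_add_le _ _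
    _ ≤ (∫ t in (0 : ℝ)..1, φ t) + κ₂ * κ₁ :=
        add_le_add (norm_sub_le_integral_of_norm_hasDerivAt_le zero_le_one hc hcφ hφ) hc0
    _ = κ₂ * (κ₁ + κ₃ * τ + ∫ t in (0 : ℝ)..ρ, ω t (τ / ρ * t)) := by
        rw [integral_modulus_along_ray_eq hint]
        ring

end SelfMap

theorem quantitative_implicit_function_theorem_general
    {X Y Z : Type*}
    [NormedAddCommGroup X] [NormedSpace ℝ X] [CompleteSpace X]
    [NormedAddCommGroup Y] [NormedSpace ℝ Y]
    [NormedAddCommGroup Z] [NormedSpace ℝ Z]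
    (U : Set X) (V : Set Y)
    (F : X × Y → Z) (DF : X × Y → (X × Y →L[ℝ] Z))
    (hF : ∀ p ∈ U ×ˢ V, HasFDerivAt F (DF p) p)
    (A : X ≃L[ℝ] Z)
    (hA : (DF (0, 0)).comp (ContinuousLinearMap.inl ℝ X Y) =
      (A : X →L[ℝ] Z))
    (ρ τ κ₁ κ₂ κ₃ : ℝ) (hρ : 0 < ρ)
    (ω : ℝ → ℝ → ℝ)
    (hωmono : ∀ s s' t t', 0 ≤ s → s ≤ s' → 0 ≤ t → t ≤ t' →
      ω s t ≤ ω s' t')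
    (hU : closedBall (0 : X) ρ ⊆ U) (hV : closedBall (0 : Y) τ ⊆ V)
    (hκ₁ : ‖F (0, 0)‖ ≤ κ₁)
    (hκ₂ : ‖(A.symm : Z →L[ℝ] X)‖ ≤ κ₂)
    (hκ₃ : ∀ u h, ‖u‖ ≤ ρ → ‖h‖ ≤ τ →
      ‖(DF (u, h)).comp (ContinuousLinearMap.inr ℝ X Y)‖ ≤ κ₃)
    (hω : ∀ u h, ‖u‖ ≤ ρ → ‖h‖ ≤ τ →
      ‖(DF (0, 0)).comp (ContinuousLinearMap.inl ℝ X Y) -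
          (DF (u, h)).comp (ContinuousLinearMap.inl ℝ X Y)‖ ≤ ω ‖u‖ ‖h‖)
    (hcontr : κ₂ * ω ρ τ < 1)
    (hball : κ₂ * (κ₁ + κ₃ * τ + ∫ t in (0 : ℝ)..ρ, ω t (τ / ρ * t)) ≤ ρ) :
    ∀ h ∈ closedBall (0 : Y) τ,
      ∃! u, u ∈ closedBall (0 : X) ρ ∧ F (u, h) = 0 := by
  intro h hh
  rw [hA] at hω
  rw [mem_closedBall_zero_iff] at hh
  have hFball : ∀ p ∈ closedBall (0 : X) ρ ×ˢ closedBall (0 : Y) τ, HasFDerivAt F (DF p) p :=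
    fun p hp => hF p (prod_mono hU hV hp)
  have hpartial : ∀ u ∈ closedBall (0 : X) ρ,
      HasFDerivAt (fun v => F (v, h)) ((DF (u, h)).comp (inl ℝ X Y)) u := fun u hu =>
    (hFball (u, h) ⟨hu, mem_closedBall_zero_iff.2 hh⟩).comp u (hasFDerivAt_prodMk_left u h)
  have hmaps : MapsTo (simplifiedNewtonMap A fun v => F (v, h))
      (closedBall 0 ρ) (closedBall 0 ρ) := fun u hu =>
    mem_closedBall_zero_iff.2 <| (norm_simplifiedNewtonMap_le hFball hκ₁ hκ₂ hκ₃ hω hωmono hρ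
      (mem_closedBall_zero_iff.1 hu) hh).trans hball
  have hlip := dist_simplifiedNewtonMap_le (convex_closedBall 0 ρ) hpartial hκ₂ fun u hu =>
    (hω u h (mem_closedBall_zero_iff.1 hu) hh).trans
      (hωmono _ _ _ _ (norm_nonneg _) (mem_closedBall_zero_iff.1 hu) (norm_nonneg _) hh)
  simpa only [simplifiedNewtonMap_eq_self_iff] using
    exists_unique_fixedPoint_of_mapsTo_of_dist_le isClosed_closedBall.isComplete
      ⟨0, mem_closedBall_self hρ.le⟩ hmaps hcontr hlip

/-- quantitative implicit function theorem. With quantitative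
bounds `κ₁` on the residual `‖F(0,0)‖`, `κ₂` on the inverse of `∂_u F(0,0)`,
`κ₃` on `∂_h F`, a modulus `ω` controlling `∂_u F(0,0) − ∂_u F(u,h)`, the
smallness conditions `κ₂ ω(ρ,τ) < 1` and
`κ₂(κ₁ + κ₃τ + ∫₀^ρ ω(t,(τ/ρ)t) dt) ≤ ρ` imply: for every `h ∈ B̄_τ(0)` there
is a unique `u ∈ B̄_ρ(0)` with `F(u,h) = 0`. -/
theorem quantitative_implicit_function_theorem
    {X Y Z : Type*}
    [NormedAddCommGroup X] [NormedSpace ℝ X] [CompleteSpace X]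
    [NormedAddCommGroup Y] [NormedSpace ℝ Y]
    [NormedAddCommGroup Z] [NormedSpace ℝ Z]
    (U : Set X) (V : Set Y) (hUo : IsOpen U) (hVo : IsOpen V)
    (F : X × Y → Z) (DF : X × Y → (X × Y →L[ℝ] Z))
    (hF : ∀ p ∈ U ×ˢ V, HasFDerivAt F (DF p) p)
    (A : X ≃L[ℝ] Z)
    (hA : (DF (0, 0)).comp (ContinuousLinearMap.inl ℝ X Y) =
      (A : X →L[ℝ] Z))
    (ρ τ κ₁ κ₂ κ₃ : ℝ) (hρ : 0 < ρ) (hτ : 0 < τ)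
    (hκ₁pos : 0 < κ₁) (hκ₂pos : 0 < κ₂) (hκ₃pos : 0 < κ₃)
    (ω : ℝ → ℝ → ℝ)
    (hωnonneg : ∀ s t, 0 ≤ ω s t)
    (hωmono : ∀ s s' t t', 0 ≤ s → s ≤ s' → 0 ≤ t → t ≤ t' →
      ω s t ≤ ω s' t')
    (hU : closedBall (0 : X) ρ ⊆ U) (hV : closedBall (0 : Y) τ ⊆ V)
    (hκ₁ : ‖F (0, 0)‖ ≤ κ₁)
    (hκ₂ : ‖(A.symm : Z →L[ℝ] X)‖ ≤ κ₂)
    (hκ₃ : ∀ u h, ‖u‖ ≤ ρ → ‖h‖ ≤ τ →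
      ‖(DF (u, h)).comp (ContinuousLinearMap.inr ℝ X Y)‖ ≤ κ₃)
    (hω : ∀ u h, ‖u‖ ≤ ρ → ‖h‖ ≤ τ →
      ‖(DF (0, 0)).comp (ContinuousLinearMap.inl ℝ X Y) -
          (DF (u, h)).comp (ContinuousLinearMap.inl ℝ X Y)‖ ≤ ω ‖u‖ ‖h‖)
    (hcontr : κ₂ * ω ρ τ < 1)
    (hball : κ₂ * (κ₁ + κ₃ * τ + ∫ t in (0 : ℝ)..ρ, ω t (τ / ρ * t)) ≤ ρ) :
    ∀ h ∈ closedBall (0 : Y) τ,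
      ∃! u, u ∈ closedBall (0 : X) ρ ∧ F (u, h) = 0 :=
  quantitative_implicit_function_theorem_general U V F DF hF A hA ρ τ κ₁ κ₂ κ₃ hρ ω hωmono hU hV hκ₁
    hκ₂ hκ₃ hω hcontr hball
end

section
/- Singular-perturbation version of the quantitative IFT: Let d ≤ 4, F_ε : U_ε×V_ε → Z_ε Fréchet differentiable families (ε ∈ (0,1]), with B̄_{r₁ε^{d/2}}(0) ⊂ U_ε, B̄_{r₂ε^{d/2}}(0) ⊂ V_ε. Suppose ‖F_ε(0,0)‖ ≤ Aε², ‖∂_u F_ε(0,0)^{-1}‖ ≤ M₁, ‖∂_h F_ε(u,h)‖ ≤ M₂ and ‖∂_uF_ε(0,0) − ∂_uF_ε(u,h)‖ ≤ M₃ε^{-d/2}(‖u‖+‖h‖) on the indicated balls, and A ≤ min{r₁/(3M₁), 1/(9M₁²M₃)}. Then with ρ_ε = λ₁ε^γ, τ_ε = λ₂ε^γ, λ₁ = min{r₁, 1/(3M₁M₃)}, λ₂ = min{r₂, 1/(3M₁M₃), λ₁/(3M₁M₂)}, for every γ ∈ [d/2, 2], ε ∈ (0,1] and h_ε ∈ B̄_{τ_ε}(0)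 there is a unique u_ε ∈ B̄_{ρ_ε}(0) with F_ε(u_ε,h_ε) = 0. -/
/-!
For fixed `ε` and `h`, a zero of `u ↦ F_ε(u, h)` in `B̄_ρ` is a fixed point of the simplified
Newton map `u ↦ u - L⁻¹ F_ε(u, h)` with `L = ∂_u F_ε(0, 0)`. Its derivative
`L⁻¹ (L - ∂_u F_ε(u, h))` has norm at most `M₁ M₃ ε^{-d/2} (ρ + τ) ≤ 2/3`, because `ρ, τ ≤ ε^γ`
and `γ ≥ d/2`. It maps `B̄_ρ` into itself because `‖L u - F_ε(u, h)‖` splits into the quadratic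
remainder `M₃ ε^{-d/2} ρ²`, the residual `A ε² ≤ A ε^γ` (here `γ ≤ 2` enters) and the parameter
increment `M₂ τ`, each of which is at most `ρ / (3 M₁)`. Banach's fixed point theorem concludes.
-/

open Metric

open Set Function ContinuousLinearMap

theorem exists_unique_isFixedPt_of_lipschitzOnWith {α : Type*} [MetricSpace α] {s : Set α}
    {f : α → α} {K : NNReal} (hsc : IsComplete s) (hne : s.Nonempty) (hsf : MapsTo f s s)
    (hK : K < 1) (hf : LipschitzOnWith K f s) : ∃! x, x ∈ s ∧ IsFixedPt f x := by
  obtain ⟨x₀, hx₀⟩ := hne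
  obtain ⟨x, hxs, hx, -⟩ := ContractingWith.exists_fixedPoint' hsc hsf
    ⟨hK, hf.mapsToRestrict hsf⟩ hx₀ (edist_ne_top _ _)
  refine ⟨x, ⟨hxs, hx⟩, fun y ⟨hys, hy⟩ => ?_⟩
  have hyx : dist y x ≤ K * dist y x := by
    simpa only [hy.eq, hx.eq] using hf.dist_le_mul y hys x hxs
  have hK' : (K : ℝ) < 1 := hK
  exact dist_le_zero.1 (by nlinarith [dist_nonneg (x := y) (y := x)])

section

variable {X Y Z : Type*} [NormedAddCommGroup X] [NormedSpace ℝ X]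
  [NormedAddCommGroup Y] [NormedSpace ℝ Y] [NormedAddCommGroup Z] [NormedSpace ℝ Z]

theorem exists_unique_zero_of_mapsTo_simplifiedNewton [CompleteSpace X] {s : Set X}
    (hsc : IsClosed s) (hs : Convex ℝ s) (hne : s.Nonempty) (L : X ≃L[ℝ] Z) {g : X → Z}
    {g' : X → X →L[ℝ] Z} {κ : ℝ} (hg : ∀ u ∈ s, HasFDerivWithinAt g (g' u) s u)
    (hg' : ∀ u ∈ s, ‖(L : X →L[ℝ] Z) - g' u‖ ≤ κ)
    (hκ : ‖(L.symm : Z →L[ℝ] X)‖ * κ < 1)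
    (hmaps : MapsTo (fun u => u - L.symm (g u)) s s) :
    ∃! u, u ∈ s ∧ g u = 0 := by
  have hderiv : ∀ u ∈ s, HasFDerivWithinAt (fun u => u - L.symm (g u))
      ((L.symm : Z →L[ℝ] X).comp ((L : X →L[ℝ] Z) - g' u)) s u := fun u hu => by
    rw [comp_sub, ContinuousLinearEquiv.coe_symm_comp_coe]
    exact (hasFDerivWithinAt_id u s).sub
      ((L.symm : Z →L[ℝ] X).hasFDerivAt.comp_hasFDerivWithinAt u (hg u hu))
  have hlip : LipschitzOnWith (‖(L.symm : Z →L[ℝ] X)‖ * κ).toNNReal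
      (fun u => u - L.symm (g u)) s :=
    hs.lipschitzOnWith_of_nnnorm_hasFDerivWithin_le hderiv fun u hu => by
      rw [← NNReal.coe_le_coe, coe_nnnorm, Real.coe_toNNReal']
      exact ((opNorm_comp_le _ _).trans
        (mul_le_mul_of_nonneg_left (hg' u hu) (norm_nonneg _))).trans (le_max_left _ _)
  simpa [IsFixedPt] using exists_unique_isFixedPt_of_lipschitzOnWith hsc.isComplete hne hmaps
    (Real.toNNReal_lt_one.2 hκ) hlip

variable {F : X × Y → Z} {DF : X × Y → X × Y →L[ℝ] Z} {ρ τ : ℝ}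

theorem norm_apply_sub_apply_zero_le_of_fderiv_snd
    (hF : ∀ u h, ‖u‖ ≤ ρ → ‖h‖ ≤ τ → HasFDerivAt F (DF (u, h)) (u, h)) {κ₃ : ℝ}
    (hDh : ∀ u h, ‖u‖ ≤ ρ → ‖h‖ ≤ τ → ‖(DF (u, h)).comp (inr ℝ X Y)‖ ≤ κ₃)
    {u : X} {h : Y} (hu : ‖u‖ ≤ ρ) (hh : ‖h‖ ≤ τ) :
    ‖F (u, h) - F (u, 0)‖ ≤ κ₃ * ‖h‖ := by
  simpa using (convex_closedBall (0 : Y) τ).norm_image_sub_le_of_norm_hasFDerivWithin_le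
    (f := fun z => F (u, z))
    (fun z hz => ((hF u z hu (mem_closedBall_zero_iff.1 hz)).comp z
      (hasFDerivAt_prodMk_right u z)).hasFDerivWithinAt)
    (fun z hz => hDh u z hu (mem_closedBall_zero_iff.1 hz))
    (mem_closedBall_self ((norm_nonneg h).trans hh)) (mem_closedBall_zero_iff.2 hh)

theorem norm_equiv_sub_apply_le_of_fderiv_fst (L : X ≃L[ℝ] Z)
    (hF : ∀ u h, ‖u‖ ≤ ρ → ‖h‖ ≤ τ → HasFDerivAt F (DF (u, h)) (u, h)) {h : Y} (hh : ‖h‖ ≤ τ)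
    {ω : ℝ} (hDu : ∀ u, ‖u‖ ≤ ρ → ‖(L : X →L[ℝ] Z) - (DF (u, h)).comp (inl ℝ X Y)‖ ≤ ω)
    {u v : X} (hu : ‖u‖ ≤ ρ) (hv : ‖v‖ ≤ ρ) :
    ‖(L u - F (u, h)) - (L v - F (v, h))‖ ≤ ω * ‖u - v‖ :=
  (convex_closedBall (0 : X) ρ).norm_image_sub_le_of_norm_hasFDerivWithin_le
    (f := fun w => L w - F (w, h))
    (fun w hw => ((L : X →L[ℝ] Z).hasFDerivAt.sub ((hF w h (mem_closedBall_zero_iff.1 hw) hh).comp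
      w (hasFDerivAt_prodMk_left w h))).hasFDerivWithinAt)
    (fun w hw => hDu w (mem_closedBall_zero_iff.1 hw))
    (mem_closedBall_zero_iff.2 hv) (mem_closedBall_zero_iff.2 hu)

theorem norm_equiv_sub_apply_le_of_quantitative_bounds (L : X ≃L[ℝ] Z) {κ₁ κ₃ ω₀ : ℝ}
    (hF : ∀ u h, ‖u‖ ≤ ρ → ‖h‖ ≤ τ → HasFDerivAt F (DF (u, h)) (u, h))
    (hF₀ : ‖F (0, 0)‖ ≤ κ₁)
    (hDh : ∀ u h, ‖u‖ ≤ ρ → ‖h‖ ≤ τ → ‖(DF (u, h)).comp (inr ℝ X Y)‖ ≤ κ₃)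
    (hDu₀ : ∀ u, ‖u‖ ≤ ρ → ‖(L : X →L[ℝ] Z) - (DF (u, 0)).comp (inl ℝ X Y)‖ ≤ ω₀)
    {u : X} {h : Y} (hu : ‖u‖ ≤ ρ) (hh : ‖h‖ ≤ τ) :
    ‖L u - F (u, h)‖ ≤ ω₀ * ρ + κ₁ + κ₃ * τ := by
  have hτ : ‖(0 : Y)‖ ≤ τ := norm_zero.trans_le ((norm_nonneg h).trans hh)
  have hρ : ‖(0 : X)‖ ≤ ρ := norm_zero.trans_le ((norm_nonneg u).trans hu)
  have hω₀ : 0 ≤ ω₀ := (norm_nonneg _).trans (hDu₀ 0 hρ)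
  have hκ₃ : 0 ≤ κ₃ := (norm_nonneg _).trans (hDh u h hu hh)
  have hsplit : L u - F (u, h) =
      ((L u - F (u, 0)) - (L 0 - F (0, 0))) - F (0, 0) - (F (u, h) - F (u, 0)) := by
    rw [map_zero]; abel
  calc ‖L u - F (u, h)‖
      ≤ ‖(L u - F (u, 0)) - (L 0 - F (0, 0))‖ + ‖F (0, 0)‖ + ‖F (u, h) - F (u, 0)‖ := by
        rw [hsplit]; exact (norm_sub_le _ _).trans (by gcongr; exact norm_sub_le _ _)
    _ ≤ ω₀ * ‖u - 0‖ + κ₁ + κ₃ * ‖h‖ := by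
        gcongr
        · exact norm_equiv_sub_apply_le_of_fderiv_fst L hF hτ hDu₀ hu hρ
        · exact norm_apply_sub_apply_zero_le_of_fderiv_snd hF hDh hu hh
    _ ≤ ω₀ * ρ + κ₁ + κ₃ * τ := by rw [sub_zero]; gcongr

theorem exists_unique_zero_of_quantitative_bounds [CompleteSpace X] (L : X ≃L[ℝ] Z)
    {κ₁ κ₂ κ₃ ω₀ ω : ℝ} (hρ : 0 ≤ ρ)
    (hF : ∀ u h, ‖u‖ ≤ ρ → ‖h‖ ≤ τ → HasFDerivAt F (DF (u, h)) (u, h))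
    (hF₀ : ‖F (0, 0)‖ ≤ κ₁) (hL : ‖(L.symm : Z →L[ℝ] X)‖ ≤ κ₂)
    (hDh : ∀ u h, ‖u‖ ≤ ρ → ‖h‖ ≤ τ → ‖(DF (u, h)).comp (inr ℝ X Y)‖ ≤ κ₃)
    (hDu₀ : ∀ u, ‖u‖ ≤ ρ → ‖(L : X →L[ℝ] Z) - (DF (u, 0)).comp (inl ℝ X Y)‖ ≤ ω₀)
    (hDu : ∀ u h, ‖u‖ ≤ ρ → ‖h‖ ≤ τ → ‖(L : X →L[ℝ] Z) - (DF (u, h)).comp (inl ℝ X Y)‖ ≤ ω)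
    (hcontr : κ₂ * ω < 1) (hself : κ₂ * (ω₀ * ρ + κ₁ + κ₃ * τ) ≤ ρ) {h : Y} (hh : ‖h‖ ≤ τ) :
    ∃! u, u ∈ closedBall (0 : X) ρ ∧ F (u, h) = 0 := by
  have hκ₂ : 0 ≤ κ₂ := (norm_nonneg _).trans hL
  have hω : 0 ≤ ω := (norm_nonneg _).trans (hDu 0 h (norm_zero.trans_le hρ) hh)
  refine exists_unique_zero_of_mapsTo_simplifiedNewton isClosed_closedBall (convex_closedBall 0 ρ)
    (nonempty_closedBall.2 hρ) L (g' := fun u => (DF (u, h)).comp (inl ℝ X Y))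
    (fun u hu => ((hF u h (mem_closedBall_zero_iff.1 hu) hh).comp u
      (hasFDerivAt_prodMk_left u h)).hasFDerivWithinAt)
    (fun u hu => hDu u h (mem_closedBall_zero_iff.1 hu) hh)
    ((mul_le_mul_of_nonneg_right hL hω).trans_lt hcontr) fun u hu => ?_
  rw [mem_closedBall_zero_iff] at hu ⊢
  calc ‖u - L.symm (F (u, h))‖ = ‖L.symm (L u - F (u, h))‖ := by simp
    _ ≤ κ₂ * ‖L u - F (u, h)‖ :=
        ((L.symm : Z →L[ℝ] X).le_opNorm _).trans (mul_le_mul_of_nonneg_right hL (norm_nonneg _))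
    _ ≤ κ₂ * (ω₀ * ρ + κ₁ + κ₃ * τ) := by
        gcongr
        exact norm_equiv_sub_apply_le_of_quantitative_bounds L hF hF₀ hDh hDu₀ hu hh
    _ ≤ ρ := hself

end

noncomputable def solutionRadius (r₁ M₁ M₃ : ℝ) : ℝ := min r₁ (1 / (3 * M₁ * M₃))

noncomputable def parameterRadius (r₁ r₂ M₁ M₂ M₃ : ℝ) : ℝ :=
  min r₂ (min (1 / (3 * M₁ * M₃)) (solutionRadius r₁ M₁ M₃ / (3 * M₁ * M₂)))

section

variable {r₁ r₂ A M₁ M₂ M₃ : ℝ}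

theorem solutionRadius_pos (hr₁ : 0 < r₁) (hM₁ : 0 < M₁) (hM₃ : 0 < M₃) :
    0 < solutionRadius r₁ M₁ M₃ :=
  lt_min hr₁ (by positivity)

theorem mul_mul_solutionRadius_le (hM₁ : 0 < M₁) (hM₃ : 0 < M₃) :
    M₁ * M₃ * solutionRadius r₁ M₁ M₃ ≤ 1 / 3 := by
  have := min_le_right r₁ (1 / (3 * M₁ * M₃))
  rw [le_div_iff₀ (by positivity)] at this
  unfold solutionRadius; linarith

theorem mul_mul_parameterRadius_le (hM₁ : 0 < M₁) (hM₃ : 0 < M₃) :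
    M₁ * M₃ * parameterRadius r₁ r₂ M₁ M₂ M₃ ≤ 1 / 3 := by
  have : parameterRadius r₁ r₂ M₁ M₂ M₃ ≤ 1 / (3 * M₁ * M₃) :=
    (min_le_right _ _).trans (min_le_left _ _)
  rw [le_div_iff₀ (by positivity)] at this
  linarith

theorem mul_mul_parameterRadius_le_solutionRadius (hM₁ : 0 < M₁) (hM₂ : 0 < M₂) :
    M₁ * M₂ * parameterRadius r₁ r₂ M₁ M₂ M₃ ≤ solutionRadius r₁ M₁ M₃ / 3 := by
  have : parameterRadius r₁ r₂ M₁ M₂ M₃ ≤ solutionRadius r₁ M₁ M₃ / (3 * M₁ * M₂) :=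
    (min_le_right _ _).trans (min_le_right _ _)
  rw [le_div_iff₀ (by positivity)] at this
  linarith

theorem mul_le_solutionRadius_div_three (hM₁ : 0 < M₁) (hM₃ : 0 < M₃)
    (hA : A ≤ min (r₁ / (3 * M₁)) (1 / (9 * M₁ ^ 2 * M₃))) :
    M₁ * A ≤ solutionRadius r₁ M₁ M₃ / 3 := by
  have h₁ := hA.trans (min_le_left _ _)
  have h₂ := hA.trans (min_le_right _ _)
  rw [le_div_iff₀ (by positivity)] at h₁ h₂
  rw [le_div_iff₀ three_pos]
  refine le_min (by linarith) ?_
  rw [le_div_iff₀ (by positivity)]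
  linarith

theorem mul_contraction_lt_one (hM₁ : 0 < M₁) (hM₃ : 0 < M₃) {s e : ℝ} (hse₀ : 0 ≤ s * e)
    (hse : s * e ≤ 1) :
    M₁ * (M₃ * s * (solutionRadius r₁ M₁ M₃ * e + parameterRadius r₁ r₂ M₁ M₂ M₃ * e)) < 1 := by
  have h₁ := mul_mul_solutionRadius_le (r₁ := r₁) hM₁ hM₃
  have h₂ := mul_mul_parameterRadius_le (r₁ := r₁) (r₂ := r₂) (M₂ := M₂) hM₁ hM₃
  calc _ = (M₁ * M₃ * solutionRadius r₁ M₁ M₃ + M₁ * M₃ * parameterRadius r₁ r₂ M₁ M₂ M₃) *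
        (s * e) := by ring
    _ ≤ 2 / 3 * (s * e) := by gcongr; linarith
    _ < 1 := by linarith

theorem mul_residual_le_solutionRadius (hr₁ : 0 < r₁) (hA : 0 < A) (hM₁ : 0 < M₁) (hM₂ : 0 < M₂)
    (hM₃ : 0 < M₃) (hAsmall : A ≤ min (r₁ / (3 * M₁)) (1 / (9 * M₁ ^ 2 * M₃))) {s e δ : ℝ}
    (he : 0 ≤ e) (hse : s * e ≤ 1) (hδ : δ ≤ e) :
    M₁ * (M₃ * s * (solutionRadius r₁ M₁ M₃ * e) * (solutionRadius r₁ M₁ M₃ * e) + A * δ +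
      M₂ * (parameterRadius r₁ r₂ M₁ M₂ M₃ * e)) ≤ solutionRadius r₁ M₁ M₃ * e := by
  have hℓ₁ := solutionRadius_pos hr₁ hM₁ hM₃
  have hquad : M₁ * M₃ * solutionRadius r₁ M₁ M₃ * (s * e) ≤ 1 / 3 :=
    (mul_le_of_le_one_right (by positivity) hse).trans (mul_mul_solutionRadius_le hM₁ hM₃)
  nlinarith [mul_le_mul_of_nonneg_right hquad (by positivity : 0 ≤ solutionRadius r₁ M₁ M₃ * e),
    mul_le_mul_of_nonneg_left hδ (by positivity : 0 ≤ M₁ * A),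
    mul_le_mul_of_nonneg_right (mul_le_solutionRadius_div_three hM₁ hM₃ hAsmall) he,
    mul_le_mul_of_nonneg_right
      (mul_mul_parameterRadius_le_solutionRadius (r₁ := r₁) (r₂ := r₂) (M₃ := M₃) hM₁ hM₂) he]

end

theorem Real.rpow_neg_div_two_mul_rpow_le_one {ε d γ : ℝ} (hε : ε ∈ Ioc 0 1) (hγ : d / 2 ≤ γ) :
    ε ^ (-d / 2) * ε ^ γ ≤ 1 := by
  rw [← Real.rpow_add hε.1]
  exact Real.rpow_le_one hε.1.le hε.2 (by linarith)

theorem quantitative_ift_singular_perturbation_general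
    (d : ℕ)
    (X Y Z : ℝ → Type*)
    [∀ ε, NormedAddCommGroup (X ε)] [∀ ε, NormedSpace ℝ (X ε)]
    [∀ ε, CompleteSpace (X ε)]
    [∀ ε, NormedAddCommGroup (Y ε)] [∀ ε, NormedSpace ℝ (Y ε)]
    [∀ ε, NormedAddCommGroup (Z ε)] [∀ ε, NormedSpace ℝ (Z ε)]
    (U : ∀ ε, Set (X ε)) (V : ∀ ε, Set (Y ε))
    (F : ∀ ε, X ε × Y ε → Z ε)
    (DF : ∀ ε, X ε × Y ε → (X ε × Y ε →L[ℝ] Z ε))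
    (r₁ r₂ A M₁ M₂ M₃ : ℝ)
    (hr₁ : 0 < r₁) (hr₂ : 0 < r₂) (hA : 0 < A)
    (hM₁ : 0 < M₁) (hM₂ : 0 < M₂) (hM₃ : 0 < M₃)
    (hballU : ∀ ε ∈ Set.Ioc (0 : ℝ) 1,
      closedBall (0 : X ε) (r₁ * ε ^ ((d : ℝ) / 2)) ⊆ U ε)
    (hballV : ∀ ε ∈ Set.Ioc (0 : ℝ) 1,
      closedBall (0 : Y ε) (r₂ * ε ^ ((d : ℝ) / 2)) ⊆ V ε)
    (hF : ∀ ε ∈ Set.Ioc (0 : ℝ) 1, ∀ p ∈ (U ε) ×ˢ (V ε),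
      HasFDerivAt (F ε) (DF ε p) p)
    (Ainv : ∀ ε, X ε ≃L[ℝ] Z ε)
    (hAinv : ∀ ε ∈ Set.Ioc (0 : ℝ) 1,
      (DF ε (0, 0)).comp (ContinuousLinearMap.inl ℝ (X ε) (Y ε)) =
        ((Ainv ε) : X ε →L[ℝ] Z ε))
    (hres : ∀ ε ∈ Set.Ioc (0 : ℝ) 1, ‖F ε (0, 0)‖ ≤ A * ε ^ 2)
    (hM₁' : ∀ ε ∈ Set.Ioc (0 : ℝ) 1, ‖((Ainv ε).symm : Z ε →L[ℝ] X ε)‖ ≤ M₁)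
    (hM₂' : ∀ ε ∈ Set.Ioc (0 : ℝ) 1, ∀ (u : X ε) (h : Y ε),
      ‖u‖ ≤ r₁ * ε ^ ((d : ℝ) / 2) → ‖h‖ ≤ r₂ * ε ^ ((d : ℝ) / 2) →
      ‖(DF ε (u, h)).comp (ContinuousLinearMap.inr ℝ (X ε) (Y ε))‖ ≤ M₂)
    (hM₃' : ∀ ε ∈ Set.Ioc (0 : ℝ) 1, ∀ (u : X ε) (h : Y ε),
      ‖u‖ ≤ r₁ * ε ^ ((d : ℝ) / 2) → ‖h‖ ≤ r₂ * ε ^ ((d : ℝ) / 2) →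
      ‖(DF ε (0, 0)).comp (ContinuousLinearMap.inl ℝ (X ε) (Y ε)) -
          (DF ε (u, h)).comp (ContinuousLinearMap.inl ℝ (X ε) (Y ε))‖ ≤
        M₃ * ε ^ (-(d : ℝ) / 2) * (‖u‖ + ‖h‖))
    (hAsmall : A ≤ min (r₁ / (3 * M₁)) (1 / (9 * M₁ ^ 2 * M₃))) :
    ∀ γ ∈ Set.Icc ((d : ℝ) / 2) 2, ∀ ε ∈ Set.Ioc (0 : ℝ) 1,
      ∀ h ∈ closedBall (0 : Y ε)
        (min r₂ (min (1 / (3 * M₁ * M₃))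
          (min r₁ (1 / (3 * M₁ * M₃)) / (3 * M₁ * M₂))) * ε ^ γ),
      ∃! u, u ∈ closedBall (0 : X ε)
          (min r₁ (1 / (3 * M₁ * M₃)) * ε ^ γ) ∧ F ε (u, h) = 0 := by
  intro γ hγ ε hε h hh
  rw [mem_closedBall_zero_iff] at hh
  change ‖h‖ ≤ parameterRadius r₁ r₂ M₁ M₂ M₃ * ε ^ γ at hh
  show ∃! u, u ∈ closedBall 0 (solutionRadius r₁ M₁ M₃ * ε ^ γ) ∧ F ε (u, h) = 0
  have hε₀ : 0 < ε := hε.1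
  have he : 0 < ε ^ γ := by positivity
  have hse := Real.rpow_neg_div_two_mul_rpow_le_one hε hγ.1
  have hεd : ε ^ γ ≤ ε ^ ((d : ℝ) / 2) := Real.rpow_le_rpow_of_exponent_ge hε.1 hε.2 hγ.1
  have hε2 : ε ^ 2 ≤ ε ^ γ := by
    simpa using Real.rpow_le_rpow_of_exponent_ge hε.1 hε.2 hγ.2
  have hρ : solutionRadius r₁ M₁ M₃ * ε ^ γ ≤ r₁ * ε ^ ((d : ℝ) / 2) :=
    mul_le_mul (min_le_left _ _) hεd he.le hr₁.le
  have hτ : parameterRadius r₁ r₂ M₁ M₂ M₃ * ε ^ γ ≤ r₂ * ε ^ ((d : ℝ) / 2) :=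
    mul_le_mul (min_le_left _ _) hεd he.le hr₂.le
  have hDu : ∀ (u : X ε) (w : Y ε), ‖u‖ ≤ solutionRadius r₁ M₁ M₃ * ε ^ γ →
      ‖w‖ ≤ parameterRadius r₁ r₂ M₁ M₂ M₃ * ε ^ γ →
      ‖((Ainv ε) : X ε →L[ℝ] Z ε) - (DF ε (u, w)).comp (inl ℝ (X ε) (Y ε))‖ ≤
        M₃ * ε ^ (-(d : ℝ) / 2) * (‖u‖ + ‖w‖) := fun u w hu hw => by
    rw [← hAinv ε hε]
    exact hM₃' ε hε u w (hu.trans hρ) (hw.trans hτ)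
  exact exists_unique_zero_of_quantitative_bounds (Ainv ε) (κ₁ := A * ε ^ 2)
    (ω₀ := M₃ * ε ^ (-(d : ℝ) / 2) * (solutionRadius r₁ M₁ M₃ * ε ^ γ))
    (mul_nonneg (solutionRadius_pos hr₁ hM₁ hM₃).le he.le)
    (fun u w hu hw => hF ε hε (u, w) ⟨hballU ε hε (mem_closedBall_zero_iff.2 (hu.trans hρ)),
      hballV ε hε (mem_closedBall_zero_iff.2 (hw.trans hτ))⟩)
    (hres ε hε) (hM₁' ε hε) (fun u w hu hw => hM₂' ε hε u w (hu.trans hρ) (hw.trans hτ))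
    (fun u hu => (hDu u 0 hu (norm_zero.trans_le ((norm_nonneg h).trans hh))).trans
      (by simp only [norm_zero, add_zero]; gcongr))
    (fun u w hu hw => (hDu u w hu hw).trans (by gcongr))
    (mul_contraction_lt_one hM₁ hM₃ (by positivity) hse)
    (mul_residual_le_solutionRadius hr₁ hA hM₁ hM₂ hM₃ hAsmall he.le hse hε2)
    hh

/-- singular-perturbation version of the quantitative implicit
function theorem. For families `F_ε` with residual `‖F_ε(0,0)‖ ≤ Aε²`,
uniformly invertible `∂_u F_ε(0,0)`, uniformly bounded `∂_h F_ε`, Lipschitz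
modulus `M₃ ε^{-d/2}(‖u‖+‖h‖)` for `∂_u F_ε`, and
`A ≤ min{r₁/(3M₁), 1/(9M₁²M₃)}`, one gets for every `γ ∈ [d/2, 2]`,
`ε ∈ (0,1]` and `h_ε ∈ B̄_{λ₂ε^γ}(0)` a unique `u_ε ∈ B̄_{λ₁ε^γ}(0)` with
`F_ε(u_ε, h_ε) = 0`, where `λ₁ = min{r₁, 1/(3M₁M₃)}` and
`λ₂ = min{r₂, 1/(3M₁M₃), λ₁/(3M₁M₂)}`. -/
theorem quantitative_ift_singular_perturbation
    (d : ℕ) (hd : 1 ≤ d) (hd4 : d ≤ 4)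
    (X Y Z : ℝ → Type*)
    [∀ ε, NormedAddCommGroup (X ε)] [∀ ε, NormedSpace ℝ (X ε)]
    [∀ ε, CompleteSpace (X ε)]
    [∀ ε, NormedAddCommGroup (Y ε)] [∀ ε, NormedSpace ℝ (Y ε)]
    [∀ ε, NormedAddCommGroup (Z ε)] [∀ ε, NormedSpace ℝ (Z ε)]
    (U : ∀ ε, Set (X ε)) (V : ∀ ε, Set (Y ε))
    (hUo : ∀ ε, IsOpen (U ε)) (hVo : ∀ ε, IsOpen (V ε))
    (F : ∀ ε, X ε × Y ε → Z ε)
    (DF : ∀ ε, X ε × Y ε → (X ε × Y ε →L[ℝ] Z ε))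
    (r₁ r₂ A M₁ M₂ M₃ : ℝ)
    (hr₁ : 0 < r₁) (hr₂ : 0 < r₂) (hA : 0 < A)
    (hM₁ : 0 < M₁) (hM₂ : 0 < M₂) (hM₃ : 0 < M₃)
    (hballU : ∀ ε ∈ Set.Ioc (0 : ℝ) 1,
      closedBall (0 : X ε) (r₁ * ε ^ ((d : ℝ) / 2)) ⊆ U ε)
    (hballV : ∀ ε ∈ Set.Ioc (0 : ℝ) 1,
      closedBall (0 : Y ε) (r₂ * ε ^ ((d : ℝ) / 2)) ⊆ V ε)
    (hF : ∀ ε ∈ Set.Ioc (0 : ℝ) 1, ∀ p ∈ (U ε) ×ˢ (V ε),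
      HasFDerivAt (F ε) (DF ε p) p)
    (Ainv : ∀ ε, X ε ≃L[ℝ] Z ε)
    (hAinv : ∀ ε ∈ Set.Ioc (0 : ℝ) 1,
      (DF ε (0, 0)).comp (ContinuousLinearMap.inl ℝ (X ε) (Y ε)) =
        ((Ainv ε) : X ε →L[ℝ] Z ε))
    (hres : ∀ ε ∈ Set.Ioc (0 : ℝ) 1, ‖F ε (0, 0)‖ ≤ A * ε ^ 2)
    (hM₁' : ∀ ε ∈ Set.Ioc (0 : ℝ) 1, ‖((Ainv ε).symm : Z ε →L[ℝ] X ε)‖ ≤ M₁)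
    (hM₂' : ∀ ε ∈ Set.Ioc (0 : ℝ) 1, ∀ (u : X ε) (h : Y ε),
      ‖u‖ ≤ r₁ * ε ^ ((d : ℝ) / 2) → ‖h‖ ≤ r₂ * ε ^ ((d : ℝ) / 2) →
      ‖(DF ε (u, h)).comp (ContinuousLinearMap.inr ℝ (X ε) (Y ε))‖ ≤ M₂)
    (hM₃' : ∀ ε ∈ Set.Ioc (0 : ℝ) 1, ∀ (u : X ε) (h : Y ε),
      ‖u‖ ≤ r₁ * ε ^ ((d : ℝ) / 2) → ‖h‖ ≤ r₂ * ε ^ ((d : ℝ) / 2) →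
      ‖(DF ε (0, 0)).comp (ContinuousLinearMap.inl ℝ (X ε) (Y ε)) -
          (DF ε (u, h)).comp (ContinuousLinearMap.inl ℝ (X ε) (Y ε))‖ ≤
        M₃ * ε ^ (-(d : ℝ) / 2) * (‖u‖ + ‖h‖))
    (hAsmall : A ≤ min (r₁ / (3 * M₁)) (1 / (9 * M₁ ^ 2 * M₃))) :
    ∀ γ ∈ Set.Icc ((d : ℝ) / 2) 2, ∀ ε ∈ Set.Ioc (0 : ℝ) 1,
      ∀ h ∈ closedBall (0 : Y ε)
        (min r₂ (min (1 / (3 * M₁ * M₃))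
          (min r₁ (1 / (3 * M₁ * M₃)) / (3 * M₁ * M₂))) * ε ^ γ),
      ∃! u, u ∈ closedBall (0 : X ε)
          (min r₁ (1 / (3 * M₁ * M₃)) * ε ^ γ) ∧ F ε (u, h) = 0 :=
  quantitative_ift_singular_perturbation_general d X Y Z U V F DF r₁ r₂ A M₁ M₂ M₃ hr₁ hr₂ hA hM₁
    hM₂ hM₃ hballU hballV hF Ainv hAinv hres hM₁' hM₂' hM₃' hAsmall
end
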